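/- Let T_α be the Bellman optimality operator of a finite discounted MDP and let γ := max over all pairs of state-action pairs ((x,a),(y,b)) with a ∈ A x and b ∈ A y of (1 − ∑_z min(p x a z, p y b z)). Then for all u, v : Fin m → ℝ, sp(T_α u − T_α v) ≤ α·γ·sp(u − v); in particular, for all n ≥ 1, sp(T_α^n v⁰ − T_α^{n−1} v⁰) ≤ (αγ)^{n−1}·sp(T_α v⁰ − v⁰). -/

import Mathlib

/-!
Two probability vectors `q₁, q₂` share the mass `∑ min (q₁ z) (q₂ z)`; what is left of each is a
nonnegative vector of total mass `δ = 1 - ∑ min (q₁ z) (q₂ z)`, so the two expectations of `w` differ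
by at most `δ · sp w`. Comparing `T u - T v` at two states `x, y` through an action maximizing the
`u`-values at `x` and one maximizing the `v`-values at `y` reduces the span contraction to this bound,
and iterating the contraction gives the geometric estimate.
-/

open Finset

/-- Span seminorm `sp(u) = max_x u(x) - min_x u(x)` on `Fin m → ℝ`. -/
noncomputable def sp {m : ℕ} [NeZero m] (u : Fin m → ℝ) : ℝ :=
  (univ.sup' univ_nonempty u) - (univ.inf' univ_nonempty u)

/-- Bellman optimality operator of a finite discounted MDP. -/
noncomputable def bellman {m K : ℕ} (A : Fin m → Finset (Fin K))
    (hA : ∀ x, (A x).Nonempty) (r : Fin m → Fin K → ℝ)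
    (p : Fin m → Fin K → Fin m → ℝ) (α : ℝ) (v : Fin m → ℝ) : Fin m → ℝ :=
  fun x => (A x).sup' (hA x) (fun a => r x a + α * ∑ y, p x a y * v y)

section Span

variable {m : ℕ} [NeZero m]

lemma sp_nonneg (u : Fin m → ℝ) : 0 ≤ sp u :=
  sub_nonneg.2 <| (inf'_le u (mem_univ 0)).trans (le_sup' u (mem_univ 0))

lemma sp_le_of_forall_sub_le {u : Fin m → ℝ} {c : ℝ} (h : ∀ x y, u x - u y ≤ c) : sp u ≤ c := by
  obtain ⟨x, -, hx⟩ := exists_mem_eq_sup' univ_nonempty u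
  obtain ⟨y, -, hy⟩ := exists_mem_eq_inf' univ_nonempty u
  rw [sp, hx, hy]
  exact h x y

lemma sum_mul_sub_sum_mul_le_mul_sp {q₁ q₂ : Fin m → ℝ} (hq₁ : ∑ z, q₁ z = 1)
    (hq₂ : ∑ z, q₂ z = 1) (w : Fin m → ℝ) :
    ∑ z, q₁ z * w z - ∑ z, q₂ z * w z ≤ (1 - ∑ z, min (q₁ z) (q₂ z)) * sp w := by
  set μ : Fin m → ℝ := fun z => min (q₁ z) (q₂ z)
  set M := univ.sup' univ_nonempty w
  set M' := univ.inf' univ_nonempty w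
  have hsplit : ∑ z, q₁ z * w z - ∑ z, q₂ z * w z =
      ∑ z, (q₁ z - μ z) * w z - ∑ z, (q₂ z - μ z) * w z := by
    simp only [sub_mul, sum_sub_distrib]
    ring
  have hupper : ∑ z, (q₁ z - μ z) * w z ≤ (1 - ∑ z, μ z) * M :=
    calc ∑ z, (q₁ z - μ z) * w z ≤ ∑ z, (q₁ z - μ z) * M :=
          sum_le_sum fun z _ => mul_le_mul_of_nonneg_left (le_sup' w (mem_univ z))
            (sub_nonneg.2 (min_le_left _ _))
      _ = (1 - ∑ z, μ z) * M := by rw [← sum_mul, sum_sub_distrib, hq₁]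
  have hlower : (1 - ∑ z, μ z) * M' ≤ ∑ z, (q₂ z - μ z) * w z :=
    calc (1 - ∑ z, μ z) * M' = ∑ z, (q₂ z - μ z) * M' := by
          rw [← sum_mul, sum_sub_distrib, hq₂]
      _ ≤ ∑ z, (q₂ z - μ z) * w z :=
          sum_le_sum fun z _ => mul_le_mul_of_nonneg_left (inf'_le w (mem_univ z))
            (sub_nonneg.2 (min_le_right _ _))
  rw [hsplit, sp, mul_sub]
  linarith

lemma sp_iterate_succ_sub_iterate_le {f : (Fin m → ℝ) → Fin m → ℝ} {c : ℝ} (hc : 0 ≤ c)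
    (hf : ∀ u v, sp (f u - f v) ≤ c * sp (u - v)) (v : Fin m → ℝ) (n : ℕ) :
    sp (f^[n + 1] v - f^[n] v) ≤ c ^ n * sp (f v - v) := by
  induction n with
  | zero => simp
  | succ n ih =>
    calc sp (f^[n + 2] v - f^[n + 1] v)
        = sp (f (f^[n + 1] v) - f (f^[n] v)) := by
          rw [Function.iterate_succ_apply' f (n + 1), Function.iterate_succ_apply' f n]
      _ ≤ c * sp (f^[n + 1] v - f^[n] v) := hf _ _
      _ ≤ c * (c ^ n * sp (f v - v)) := mul_le_mul_of_nonneg_left ih hc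
      _ = c ^ (n + 1) * sp (f v - v) := by ring

end Span

lemma Finset.exists_mem_sup'_sub_sup'_le {ι : Type*} {s : Finset ι} (hs : s.Nonempty)
    (f g : ι → ℝ) : ∃ a ∈ s, s.sup' hs f - s.sup' hs g ≤ f a - g a := by
  obtain ⟨a, ha, hfa⟩ := exists_mem_eq_sup' hs f
  exact ⟨a, ha, by rw [hfa]; exact sub_le_sub_left (le_sup' g ha) _⟩

section Bellman

variable {m K : ℕ} (A : Fin m → Finset (Fin K)) (hA : ∀ x, (A x).Nonempty)
  (r : Fin m → Fin K → ℝ) (p : Fin m → Fin K → Fin m → ℝ) (α : ℝ)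

lemma exists_bellman_sub_le (u v : Fin m → ℝ) (x : Fin m) : ∃ a ∈ A x,
    bellman A hA r p α u x - bellman A hA r p α v x ≤ α * ∑ z, p x a z * (u - v) z := by
  obtain ⟨a, ha, hle⟩ := exists_mem_sup'_sub_sup'_le (hA x)
    (fun a => r x a + α * ∑ z, p x a z * u z) (fun a => r x a + α * ∑ z, p x a z * v z)
  refine ⟨a, ha, hle.trans_eq ?_⟩
  simp only [Pi.sub_apply, mul_sub, sum_sub_distrib]
  ring

lemma exists_le_bellman_sub (u v : Fin m → ℝ) (x : Fin m) : ∃ a ∈ A x,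
    α * ∑ z, p x a z * (u - v) z ≤ bellman A hA r p α u x - bellman A hA r p α v x := by
  obtain ⟨a, ha, hle⟩ := exists_bellman_sub_le A hA r p α v u x
  refine ⟨a, ha, ?_⟩
  have hswap : ∑ z, p x a z * (u - v) z = -∑ z, p x a z * (v - u) z := by
    simp only [← sum_neg_distrib, Pi.sub_apply]
    exact sum_congr rfl fun z _ => by ring
  rw [hswap]
  linarith

lemma sp_bellman_sub_le [NeZero m] (hp : ∀ x a, a ∈ A x → ∑ y, p x a y = 1) (hα : 0 ≤ α)
    {γ : ℝ} (hγ : ∀ x y a b, a ∈ A x → b ∈ A y → 1 - ∑ z, min (p x a z) (p y b z) ≤ γ)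
    (u v : Fin m → ℝ) :
    sp (bellman A hA r p α u - bellman A hA r p α v) ≤ α * γ * sp (u - v) := by
  refine sp_le_of_forall_sub_le fun x y => ?_
  obtain ⟨a, ha, hx⟩ := exists_bellman_sub_le A hA r p α u v x
  obtain ⟨b, hb, hy⟩ := exists_le_bellman_sub A hA r p α u v y
  have hcoupling := sum_mul_sub_sum_mul_le_mul_sp (hp x a ha) (hp y b hb) (u - v)
  calc _ ≤ α * (∑ z, p x a z * (u - v) z - ∑ z, p y b z * (u - v) z) := by
        simp only [Pi.sub_apply] at hx hy ⊢
        linarith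
    _ ≤ α * ((1 - ∑ z, min (p x a z) (p y b z)) * sp (u - v)) :=
        mul_le_mul_of_nonneg_left hcoupling hα
    _ ≤ α * (γ * sp (u - v)) :=
        mul_le_mul_of_nonneg_left
          (mul_le_mul_of_nonneg_right (hγ x y a b ha hb) (sp_nonneg _)) hα
    _ = α * γ * sp (u - v) := by ring

end Bellman

theorem stmt2_general {m K : ℕ} [NeZero m] (A : Fin m → Finset (Fin K))
    (hA : ∀ x, (A x).Nonempty) (r : Fin m → Fin K → ℝ)
    (p : Fin m → Fin K → Fin m → ℝ)
    (hp1 : ∀ x a, a ∈ A x → ∑ y, p x a y = 1)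
    (α : ℝ) (hα0 : 0 ≤ α)
    (γ : ℝ)
    (hγdef : IsGreatest {g : ℝ | ∃ x y a b, a ∈ A x ∧ b ∈ A y ∧
        g = 1 - ∑ z, min (p x a z) (p y b z)} γ) :
    (∀ u v : Fin m → ℝ,
      sp (bellman A hA r p α u - bellman A hA r p α v) ≤ α * γ * sp (u - v)) ∧
    (∀ (v0 : Fin m → ℝ) (n : ℕ), 1 ≤ n →
      sp ((bellman A hA r p α)^[n] v0 - (bellman A hA r p α)^[n - 1] v0) ≤
        (α * γ) ^ (n - 1) * sp (bellman A hA r p α v0 - v0)) := by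
  have hγ x y a b (ha : a ∈ A x) (hb : b ∈ A y) : 1 - ∑ z, min (p x a z) (p y b z) ≤ γ :=
    hγdef.2 ⟨x, y, a, b, ha, hb, rfl⟩
  have hγ0 : 0 ≤ γ := by
    obtain ⟨a, ha⟩ := hA 0
    simpa [hp1 0 a ha] using hγ 0 0 a a ha ha
  have hcontract := sp_bellman_sub_le A hA r p α hp1 hα0 hγ
  refine ⟨hcontract, fun v0 n hn => ?_⟩
  obtain ⟨n, rfl⟩ := Nat.exists_eq_add_of_le' hn
  exact sp_iterate_succ_sub_iterate_le (mul_nonneg hα0 hγ0) hcontract v0 n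

theorem stmt2 {m K : ℕ} [NeZero m] (A : Fin m → Finset (Fin K))
    (hA : ∀ x, (A x).Nonempty) (r : Fin m → Fin K → ℝ)
    (p : Fin m → Fin K → Fin m → ℝ)
    (hp0 : ∀ x a y, a ∈ A x → 0 ≤ p x a y)
    (hp1 : ∀ x a, a ∈ A x → ∑ y, p x a y = 1)
    (α : ℝ) (hα0 : 0 ≤ α) (hα1 : α < 1)
    (γ : ℝ)
    (hγdef : IsGreatest {g : ℝ | ∃ x y a b, a ∈ A x ∧ b ∈ A y ∧
        g = 1 - ∑ z, min (p x a z) (p y b z)} γ) :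
    (∀ u v : Fin m → ℝ,
      sp (bellman A hA r p α u - bellman A hA r p α v) ≤ α * γ * sp (u - v)) ∧
    (∀ (v0 : Fin m → ℝ) (n : ℕ), 1 ≤ n →
      sp ((bellman A hA r p α)^[n] v0 - (bellman A hA r p α)^[n - 1] v0) ≤
        (α * γ) ^ (n - 1) * sp (bellman A hA r p α v0 - v0)) :=
  stmt2_general A hA r p hp1 α hα0 γ hγdef
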